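/- Let μ ≠ 0 be a real number and let M be the 4×4 real matrix with rows (0,1,0,0), (0,0,1,0), (0,0,0,1), (μ⁴,0,0,0). Then for every real x, the matrix exponential exp(x·M) equals the 4×4 matrix with rows (z₁(x), z₂(x), z₃(x), z₄(x)), (μ⁴z₄(x), z₁(x), z₂(x), z₃(x)), (μ⁴z₃(x), μ⁴z₄(x), z₁(x), z₂(x)), (μ⁴z₂(x), μ⁴z₃(x), μ⁴z₄(x), z₁(x)). -/

import Mathlib

/-- z₁(x) = (cosh μx + cos μx)/2. -/
noncomputable def z1 (μ x : ℝ) : ℝ := (Real.cosh (μ * x) + Real.cos (μ * x)) / 2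

/-- z₂(x) = (sinh μx + sin μx)/(2μ). -/
noncomputable def z2 (μ x : ℝ) : ℝ := (Real.sinh (μ * x) + Real.sin (μ * x)) / (2 * μ)

/-- z₃(x) = (cosh μx − cos μx)/(2μ²). -/
noncomputable def z3 (μ x : ℝ) : ℝ := (Real.cosh (μ * x) - Real.cos (μ * x)) / (2 * μ ^ 2)

/-- z₄(x) = (sinh μx − sin μx)/(2μ³). -/
noncomputable def z4 (μ x : ℝ) : ℝ := (Real.sinh (μ * x) - Real.sin (μ * x)) / (2 * μ ^ 3)

open NormedSpace

attribute [local instance] Matrix.linftyOpNormedAddCommGroup Matrix.linftyOpNormedRing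
  Matrix.linftyOpNormedAlgebra

set_option maxHeartbeats 1000000 in
/-- The matrix exponential `exp(xM)` of `M = [[0,1,0,0],[0,0,1,0],[0,0,0,1],[μ⁴,0,0,0]]`. -/
theorem matrix_exp_eq (μ : ℝ) (hμ : μ ≠ 0) (x : ℝ) :
    NormedSpace.exp
        (x • (!![0, 1, 0, 0; 0, 0, 1, 0; 0, 0, 0, 1; μ ^ 4, 0, 0, 0] :
          Matrix (Fin 4) (Fin 4) ℝ)) =
      !![z1 μ x, z2 μ x, z3 μ x, z4 μ x;
         μ ^ 4 * z4 μ x, z1 μ x, z2 μ x, z3 μ x;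
         μ ^ 4 * z3 μ x, μ ^ 4 * z4 μ x, z1 μ x, z2 μ x;
         μ ^ 4 * z2 μ x, μ ^ 4 * z3 μ x, μ ^ 4 * z4 μ x, z1 μ x] := by
  letI : CompleteSpace (Matrix (Fin 4) (Fin 4) ℝ) := inferInstance
  set M : Matrix (Fin 4) (Fin 4) ℝ := !![0, 1, 0, 0; 0, 0, 1, 0; 0, 0, 0, 1; μ ^ 4, 0, 0, 0]
    with hM
  have h2 : M ^ 2 = !![0,0,1,0; 0,0,0,1; μ^4,0,0,0; 0,μ^4,0,0] := by
    rw [pow_two, hM]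
    ext i j
    fin_cases i <;> fin_cases j <;> simp [Matrix.mul_apply, Fin.sum_univ_succ, Matrix.vecHead, Matrix.vecTail]
  have h3 : M ^ 3 = !![0,0,0,1; μ^4,0,0,0; 0,μ^4,0,0; 0,0,μ^4,0] := by
    rw [pow_succ, h2, hM]
    ext i j
    fin_cases i <;> fin_cases j <;> simp [Matrix.mul_apply, Fin.sum_univ_succ, Matrix.vecHead, Matrix.vecTail]
  have h4 : M ^ 4 = (μ ^ 4) • (1 : Matrix (Fin 4) (Fin 4) ℝ) := by
    rw [pow_succ, h3, hM]
    ext i j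
    fin_cases i <;> fin_cases j <;>
      simp [Matrix.mul_apply, Fin.sum_univ_succ, Matrix.one_apply, Matrix.vecHead, Matrix.vecTail]
  set f : ℝ → Matrix (Fin 4) (Fin 4) ℝ :=
    fun t => z1 μ t • (1 : Matrix (Fin 4) (Fin 4) ℝ) + z2 μ t • M + z3 μ t • M ^ 2
      + z4 μ t • M ^ 3 with hf
  -- derivatives of the scalar functions
  have hmul : ∀ t : ℝ, HasDerivAt (fun s : ℝ => μ * s) μ t := fun t => by
    simpa using (hasDerivAt_id t).const_mul μ
  have hch : ∀ t, HasDerivAt (fun s => Real.cosh (μ * s)) (μ * Real.sinh (μ * t)) t := fun t => by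
    simpa [mul_comm, Function.comp_def] using (Real.hasDerivAt_cosh (μ * t)).comp t (hmul t)
  have hsh : ∀ t, HasDerivAt (fun s => Real.sinh (μ * s)) (μ * Real.cosh (μ * t)) t := fun t => by
    simpa [mul_comm, Function.comp_def] using (Real.hasDerivAt_sinh (μ * t)).comp t (hmul t)
  have hcs : ∀ t, HasDerivAt (fun s => Real.cos (μ * s)) (-(μ * Real.sin (μ * t))) t := fun t => by
    simpa [mul_comm, Function.comp_def] using (Real.hasDerivAt_cos (μ * t)).comp t (hmul t)
  have hsn : ∀ t, HasDerivAt (fun s => Real.sin (μ * s)) (μ * Real.cos (μ * t)) t := fun t => by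
    simpa [mul_comm, Function.comp_def] using (Real.hasDerivAt_sin (μ * t)).comp t (hmul t)
  have hz1 : ∀ t, HasDerivAt (z1 μ) (μ ^ 4 * z4 μ t) t := fun t => by
    have := ((hch t).add (hcs t)).div_const 2
    refine HasDerivAt.congr_deriv this ?_
    simp only [z4]
    field_simp
    ring
  have hz2 : ∀ t, HasDerivAt (z2 μ) (z1 μ t) t := fun t => by
    have := ((hsh t).add (hsn t)).div_const (2 * μ)
    refine HasDerivAt.congr_deriv this ?_
    simp only [z1]
    field_simp
  have hz3 : ∀ t, HasDerivAt (z3 μ) (z2 μ t) t := fun t => by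
    have := ((hch t).sub (hcs t)).div_const (2 * μ ^ 2)
    refine HasDerivAt.congr_deriv this ?_
    simp only [z2]
    field_simp
    ring
  have hz4 : ∀ t, HasDerivAt (z4 μ) (z3 μ t) t := fun t => by
    have := ((hsh t).sub (hsn t)).div_const (2 * μ ^ 3)
    refine HasDerivAt.congr_deriv this ?_
    simp only [z3]
    field_simp
  have hfd : ∀ t, HasDerivAt f (M * f t) t := fun t => by
    have h := ((((hz1 t).smul_const (1 : Matrix (Fin 4) (Fin 4) ℝ)).add
      ((hz2 t).smul_const M)).add ((hz3 t).smul_const (M ^ 2))).add ((hz4 t).smul_const (M ^ 3))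
    have he : (μ ^ 4 * z4 μ t) • (1 : Matrix (Fin 4) (Fin 4) ℝ) + z1 μ t • M
        + z2 μ t • M ^ 2 + z3 μ t • M ^ 3 = M * f t := by
      rw [hf]
      simp only [mul_add, mul_smul_comm, Matrix.mul_one, mul_one]
      rw [show M * M ^ 2 = M ^ 3 by rw [← pow_succ'], show M * M ^ 3 = M ^ 4 by rw [← pow_succ'],
        show M * M = M ^ 2 by rw [← pow_two], h4, smul_smul, mul_comm (z4 μ t)]
      abel
    exact he ▸ h
  have hf0 : f 0 = 1 := by
    have e1 : z1 μ 0 = 1 := by simp [z1]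
    have e2 : z2 μ 0 = 0 := by simp [z2]
    have e3 : z3 μ 0 = 0 := by simp [z3]
    have e4 : z4 μ 0 = 0 := by simp [z4]
    rw [hf]
    simp only []
    rw [e1, e2, e3, e4, one_smul, zero_smul, zero_smul, zero_smul, add_zero, add_zero, add_zero]
  -- the standard uniqueness trick
  set g : ℝ → Matrix (Fin 4) (Fin 4) ℝ := fun t => exp ((-t) • M) * f t with hg
  have hgd : ∀ t, HasDerivAt g 0 t := fun t => by
    have hneg : HasDerivAt (fun s : ℝ => -s) (-1) t := by exact (hasDerivAt_id' t).neg
    have hE : HasDerivAt (fun s : ℝ => exp ((-s) • M)) (-(M * exp ((-t) • M))) t := by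
      have h' := ((hasDerivAt_exp_smul_const' (𝕂 := ℝ) M (-t)).scomp t hneg)
      simp [Function.comp_def, neg_smul] at h' ⊢
      exact h'
    have h := hE.mul (hfd t)
    have hEM : Commute (exp ((-t) • M)) M :=
      (((Commute.refl M).smul_left (-t)).exp_left)
    have : -(M * exp ((-t) • M)) * f t + exp ((-t) • M) * (M * f t) = 0 := by
      rw [← mul_assoc (exp ((-t) • M)) M (f t), hEM.eq, neg_mul, mul_assoc]
      exact neg_add_cancel _
    rwa [this] at h
  have hgc : ∀ t, g t = g 0 := fun t =>
    is_const_of_deriv_eq_zero (fun s => (hgd s).differentiableAt)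
      (fun s => (hgd s).deriv) t 0
  have hg0 : g 0 = 1 := by
    simp only [hg, neg_zero, zero_smul, exp_zero, one_mul, hf0]
  have hinv : exp (x • M) * exp ((-x) • M) = 1 := by
    have hc := exp_add_of_commute (((Commute.refl M).smul_left x).smul_right (-x))
    rw [show x • M + (-x) • M = 0 by rw [← add_smul]; simp, exp_zero] at hc
    exact hc.symm
  have hgx := (hgc x).trans hg0
  have hfx : f x = exp (x • M) := by
    calc f x = (exp (x • M) * exp ((-x) • M)) * f x := by rw [hinv, one_mul]
    _ = exp (x • M) * g x := by rw [mul_assoc, hg]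
    _ = exp (x • M) := by rw [hgx, mul_one]
  rw [← hfx, hf]
  rw [h2, h3]
  ext i j
  fin_cases i <;> fin_cases j <;>
    simp [h2, h3, hM, Matrix.one_apply, Matrix.vecHead, Matrix.vecTail, mul_comm]
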